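/- Let x be a random vector in ℝᵖ with mean zero and finite covariance matrix Σ. Partition the coordinates into a block m and its complement −m, so that Σ has blocks Σ_{mm}, Σ_{m,−m}, Σ_{−m,m}, Σ_{−m,−m}, and assume Σ_{−m,−m} is invertible. Let β ∈ ℝᵖ with blocks β_m and β_{−m}, let σ_ε > 0, and set s² = β_mᵀ (Σ_{mm} − Σ_{m,−m} Σ_{−m,−m}⁻¹ Σ_{−m,m}) β_m, assuming s² > 0. Then 2·E_x[ KL( N(xᵀβ, σ_ε²) ‖ N(x_{−m}ᵀβ_{−m}, s² + σ_ε²) ) ] = log( (s² + σ_ε²)/σ_ε² ) + ( β_mᵀ Σ_{mm} β_m − s² )/( s² + σ_ε² ). (This is the paper's equation (4) from Example 1: in the multimodal linear model y = xᵀβ + ε with Var(ε) = σ_ε², the expected relative entropy H_m of the m-th modality equals log( (σ²_{m|−m} + σ_ε²)/σ_ε² ) + ( β_mᵀ Σ_m β_m − σ²_{m|−m} )/( σ²_{m|−m} + σ_ε² ), where σ²_{m|−m} = Var(x_mᵀβ_m | x_{−m}) = s² for Gaussian x and the reduced conditional law of y given x_{−m} is N(x_{−m}ᵀβ_{−m},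 σ²_{m|−m} + σ_ε²).) -/

import Mathlib

/-!
The KL divergence from `N(μ₁, v₁)` to `N(μ₂, v₂)` is `(log (v₂/v₁) + (v₁ + (μ₁ - μ₂)²)/v₂ - 1)/2`,
obtained by integrating the log-ratio of the two densities against `N(μ₁, v₁)` using its first two
moments. In the theorem `μ₁ - μ₂ = x_mᵀβ_m` while the variances do not depend on `x`, so the
integrand is an affine function of `(x_mᵀβ_m)²`, whose expectation is `β_mᵀ Σ_mm β_m`.
-/

open MeasureTheory ProbabilityTheory Real Matrix
open scoped NNReal

/-- The Kullback--Leibler divergence `KL(P ‖ Q) = ∫ log (dP/dQ) dP`. -/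
noncomputable def klDivergence {T : Type*} [MeasurableSpace T] (P Q : Measure T) : ℝ :=
  ∫ y, Real.log ((P.rnDeriv Q) y).toReal ∂P

namespace ProbabilityTheory

lemma log_gaussianPDFReal (μ : ℝ) {v : ℝ≥0} (hv : v ≠ 0) (x : ℝ) :
    log (gaussianPDFReal μ v x) = -(log (2 * π * v) + (x - μ) ^ 2 / v) / 2 := by
  rw [gaussianPDFReal, log_mul (by positivity) (exp_ne_zero _), log_inv, log_exp,
    log_sqrt (by positivity)]
  field_simp
  ring

lemma llr_gaussianReal (μ₁ μ₂ : ℝ) {v₁ v₂ : ℝ≥0} (h₁ : v₁ ≠ 0) (h₂ : v₂ ≠ 0) :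
    llr (gaussianReal μ₁ v₁) (gaussianReal μ₂ v₂) =ᵐ[gaussianReal μ₁ v₁]
      fun x ↦ (log (v₂ / v₁) + (x - μ₂) ^ 2 / v₂ - (x - μ₁) ^ 2 / v₁) / 2 := by
  have hratio := Measure.rnDeriv_eq_div (gaussianReal_absolutelyContinuous μ₁ h₁)
    (gaussianReal_absolutelyContinuous μ₂ h₂)
  filter_upwards [gaussianReal_absolutelyContinuous μ₁ h₁
      (gaussianReal_absolutelyContinuous' μ₂ h₂ hratio),
    gaussianReal_absolutelyContinuous μ₁ h₁ (rnDeriv_gaussianReal μ₁ v₁),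
    gaussianReal_absolutelyContinuous μ₁ h₁ (rnDeriv_gaussianReal μ₂ v₂)] with x hx hx₁ hx₂
  have hp₁ := gaussianPDFReal_pos μ₁ v₁ x h₁
  have hp₂ := gaussianPDFReal_pos μ₂ v₂ x h₂
  have hv₁ : (0 : ℝ) < v₁ := by positivity
  have hv₂ : (0 : ℝ) < v₂ := by positivity
  rw [llr, hx, hx₁, hx₂, gaussianPDF, gaussianPDF, ENNReal.toReal_div,
    ENNReal.toReal_ofReal hp₁.le, ENNReal.toReal_ofReal hp₂.le, log_div hp₁.ne' hp₂.ne',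
    log_gaussianPDFReal μ₁ h₁, log_gaussianPDFReal μ₂ h₂,
    log_div hv₂.ne' hv₁.ne', log_mul (by positivity) hv₁.ne', log_mul (by positivity) hv₂.ne']
  ring

lemma integral_sub_sq_gaussianReal (μ : ℝ) (v : ℝ≥0) (c : ℝ) :
    ∫ x, (x - c) ^ 2 ∂gaussianReal μ v = v + (μ - c) ^ 2 := by
  have hX : MemLp (fun x ↦ x - c) 2 (gaussianReal μ v) :=
    (memLp_id_gaussianReal 2).sub (memLp_const c)
  have hmean : ∫ x, (x - c) ∂gaussianReal μ v = μ - c := by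
    rw [integral_sub (f := fun x ↦ x) ((memLp_id_gaussianReal 1).integrable le_rfl)
      (integrable_const c), integral_id_gaussianReal, integral_const, probReal_univ, one_smul]
  have hvar := variance_eq_sub hX
  rw [variance_sub_const (X := fun x ↦ x) aestronglyMeasurable_id, variance_fun_id_gaussianReal,
    hmean] at hvar
  simp only [Pi.pow_apply] at hvar
  linarith

end ProbabilityTheory

lemma klDivergence_gaussianReal (μ₁ μ₂ : ℝ) {v₁ v₂ : ℝ≥0} (h₁ : v₁ ≠ 0) (h₂ : v₂ ≠ 0) :
    klDivergence (gaussianReal μ₁ v₁) (gaussianReal μ₂ v₂)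
      = (log (v₂ / v₁) + (v₁ + (μ₁ - μ₂) ^ 2) / v₂ - 1) / 2 := by
  have hsq (c : ℝ) : Integrable (fun x ↦ (x - c) ^ 2) (gaussianReal μ₁ v₁) :=
    ((memLp_id_gaussianReal 2).sub (memLp_const c)).integrable_sq
  change ∫ x, llr _ _ x ∂_ = _
  rw [integral_congr_ae (llr_gaussianReal μ₁ μ₂ h₁ h₂), integral_div,
    integral_sub (f := fun x ↦ log (v₂ / v₁) + (x - μ₂) ^ 2 / v₂)
      ((integrable_const _).add ((hsq μ₂).div_const _)) ((hsq μ₁).div_const _),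
    integral_add (f := fun _ ↦ log (v₂ / v₁)) (integrable_const _) ((hsq μ₂).div_const _),
    integral_const, probReal_univ, one_smul, integral_div, integral_div,
    integral_sub_sq_gaussianReal, integral_sub_sq_gaussianReal, sub_self]
  field_simp
  ring

section SecondMoment

variable {Ω ι : Type*} [MeasurableSpace Ω] [Fintype ι] {P : Measure Ω} {x : Ω → ι → ℝ}

noncomputable def secondMomentMatrix (P : Measure Ω) (x : Ω → ι → ℝ) : Matrix ι ι ℝ :=
  Matrix.of fun i j ↦ ∫ ω, x ω i * x ω j ∂P

lemma dotProduct_sq_eq_sum (y β : ι → ℝ) :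
    (y ⬝ᵥ β) ^ 2 = ∑ i, ∑ j, β i * β j * (y i * y j) := by
  rw [dotProduct, sq, Finset.sum_mul_sum]
  exact Finset.sum_congr rfl fun i _ ↦ Finset.sum_congr rfl fun j _ ↦ by ring

lemma integrable_dotProduct_sq (hx : ∀ i j, Integrable (fun ω ↦ x ω i * x ω j) P) (β : ι → ℝ) :
    Integrable (fun ω ↦ (x ω ⬝ᵥ β) ^ 2) P := by
  simp only [dotProduct_sq_eq_sum]
  exact integrable_finsetSum _ fun i _ ↦ integrable_finsetSum _ fun j _ ↦ (hx i j).const_mul _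

lemma integral_dotProduct_sq (hx : ∀ i j, Integrable (fun ω ↦ x ω i * x ω j) P) (β : ι → ℝ) :
    ∫ ω, (x ω ⬝ᵥ β) ^ 2 ∂P = β ⬝ᵥ (secondMomentMatrix P x *ᵥ β) := by
  simp only [dotProduct_sq_eq_sum]
  rw [integral_finsetSum _ fun i _ ↦ integrable_finsetSum _ fun j _ ↦ (hx i j).const_mul _]
  simp only [integral_finsetSum _ fun j _ ↦ (hx _ j).const_mul _, integral_const_mul,
    dotProduct, mulVec, secondMomentMatrix, Matrix.of_apply, Finset.mul_sum]
  exact Finset.sum_congr rfl fun i _ ↦ Finset.sum_congr rfl fun j _ ↦ by ring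

end SecondMoment

theorem expected_relative_entropy_linear_general
    {Ω ι κ : Type*} [MeasurableSpace Ω] [Fintype ι] [Fintype κ]
    (P : Measure Ω) [IsProbabilityMeasure P]
    (xm : Ω → ι → ℝ) (xr : Ω → κ → ℝ)
    -- finite covariance matrix: all second moments exist
    (hint_mm : ∀ i j, Integrable (fun ω => xm ω i * xm ω j) P)
    -- the covariance blocks
    (Smm : Matrix ι ι ℝ)
    (hSmm : ∀ i j, Smm i j = ∫ ω, xm ω i * xm ω j ∂P)
    (βm : ι → ℝ) (βr : κ → ℝ) (σε : ℝ) (hσε : 0 < σε)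
    (s2 : ℝ) (hs2pos : 0 < s2) :
    2 * ∫ ω, klDivergence
        (gaussianReal (xm ω ⬝ᵥ βm + xr ω ⬝ᵥ βr) (σε ^ 2).toNNReal)
        (gaussianReal (xr ω ⬝ᵥ βr) (s2 + σε ^ 2).toNNReal) ∂P
      = Real.log ((s2 + σε ^ 2) / σε ^ 2)
          + (βm ⬝ᵥ (Smm *ᵥ βm) - s2) / (s2 + σε ^ 2) := by
  have hσ : 0 < σε ^ 2 := by positivity
  have hv : 0 < s2 + σε ^ 2 := by positivity
  have hKL (ω : Ω) : klDivergence
      (gaussianReal (xm ω ⬝ᵥ βm + xr ω ⬝ᵥ βr) (σε ^ 2).toNNReal)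
      (gaussianReal (xr ω ⬝ᵥ βr) (s2 + σε ^ 2).toNNReal)
      = (log ((s2 + σε ^ 2) / σε ^ 2) + σε ^ 2 / (s2 + σε ^ 2) - 1) / 2
        + (xm ω ⬝ᵥ βm) ^ 2 / (2 * (s2 + σε ^ 2)) := by
    rw [klDivergence_gaussianReal _ _ (by positivity) (by positivity), add_sub_cancel_right,
      Real.coe_toNNReal _ hσ.le, Real.coe_toNNReal _ hv.le]
    field_simp
    ring
  have hSmm' : Smm = secondMomentMatrix P xm := Matrix.ext hSmm
  simp only [hKL]
  rw [integral_add (integrable_const _) ((integrable_dotProduct_sq hint_mm βm).div_const _),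
    integral_const, probReal_univ, one_smul, integral_div, integral_dotProduct_sq hint_mm,
    ← hSmm']
  field_simp
  ring

/-- Equation (4) of the paper (Example 1, multimodal linear regression). The random vector `x`
is split into the `m`-th modality block `xm` (indexed by `ι`) and the complementary block `xr`
(indexed by `κ`). With mean zero and covariance blocks `Smm, Smr, Srm, Srr`, invertible
`Srr`, and `s² = βmᵀ (Smm - Smr Srr⁻¹ Srm) βm > 0`, the expected relative entropy of the
`m`-th modality is
`2 E[KL(N(xᵀβ, σε²) ‖ N(x₋ₘᵀβ₋ₘ, s² + σε²))]
  = log ((s² + σε²)/σε²) + (βmᵀ Smm βm - s²)/(s² + σε²)`. -/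
theorem expected_relative_entropy_linear
    {Ω ι κ : Type*} [MeasurableSpace Ω] [Fintype ι] [Fintype κ] [DecidableEq κ]
    (P : Measure Ω) [IsProbabilityMeasure P]
    (xm : Ω → ι → ℝ) (xr : Ω → κ → ℝ)
    (hxm : Measurable xm) (hxr : Measurable xr)
    -- finite covariance matrix: all second moments exist
    (hint_mm : ∀ i j, Integrable (fun ω => xm ω i * xm ω j) P)
    (hint_mr : ∀ i j, Integrable (fun ω => xm ω i * xr ω j) P)
    (hint_rr : ∀ i j, Integrable (fun ω => xr ω i * xr ω j) P)
    -- mean zero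
    (hmean_m : ∀ i, ∫ ω, xm ω i ∂P = 0) (hmean_r : ∀ j, ∫ ω, xr ω j ∂P = 0)
    -- the covariance blocks
    (Smm : Matrix ι ι ℝ) (Smr : Matrix ι κ ℝ) (Srm : Matrix κ ι ℝ) (Srr : Matrix κ κ ℝ)
    (hSmm : ∀ i j, Smm i j = ∫ ω, xm ω i * xm ω j ∂P)
    (hSmr : ∀ i j, Smr i j = ∫ ω, xm ω i * xr ω j ∂P)
    (hSrm : ∀ i j, Srm i j = ∫ ω, xr ω i * xm ω j ∂P)
    (hSrr : ∀ i j, Srr i j = ∫ ω, xr ω i * xr ω j ∂P)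
    (hinv : IsUnit Srr.det)
    (βm : ι → ℝ) (βr : κ → ℝ) (σε : ℝ) (hσε : 0 < σε)
    (s2 : ℝ) (hs2 : s2 = βm ⬝ᵥ ((Smm - Smr * Srr⁻¹ * Srm) *ᵥ βm)) (hs2pos : 0 < s2) :
    2 * ∫ ω, klDivergence
        (gaussianReal (xm ω ⬝ᵥ βm + xr ω ⬝ᵥ βr) (σε ^ 2).toNNReal)
        (gaussianReal (xr ω ⬝ᵥ βr) (s2 + σε ^ 2).toNNReal) ∂P
      = Real.log ((s2 + σε ^ 2) / σε ^ 2)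
          + (βm ⬝ᵥ (Smm *ᵥ βm) - s2) / (s2 + σε ^ 2) :=
  expected_relative_entropy_linear_general P xm xr hint_mm Smm hSmm βm βr σε hσε s2 hs2pos
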